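/- arXiv:2407.13428 — 7 statements merged into one kernel-verified Lean document; each statement's English description precedes it below -/
import Mathlib

section
/- Simulations preserve spectra below the cut-off: if f : S → T is a simulation with cut-off Δ and shift Γ, then the set of energies of T strictly below Δ equals the set of shifted energies of S strictly below Δ, i.e., {ξ ∈ Im(H_T) : ξ < Δ} = {ξ ∈ Im(H_S − Γ) : ξ < Δ}. -/
/-- A spin system, abstracted to its (finite) set of spins, spin type and Hamiltonian. -/
structure SpinSys where
  V : Type
  fintypeV : Fintype V
  decV : DecidableEq V
  q : ℕ
  two_le_q : 2 ≤ q
  H : (V → Fin q) → ℝ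
  H_nonneg : ∀ s, 0 ≤ H s

attribute [instance] SpinSys.fintypeV SpinSys.decV

/-- The configuration space of a spin system. -/
abbrev SpinSys.Config (S : SpinSys) : Type := S.V → Fin S.q

/-- A simulation of the target spin system `T` by the source spin system `S`.
`K` indexes the physical spins of a single target spin (the order of the encoding),
`M` indexes the encodings (the size of the encoding). -/
structure Simulation (S T : SpinSys) (K M : Type) [Fintype K] [Fintype M] where
  /-- the cut-off -/
  Δ : ℝ
  /-- the energy shift -/
  Γ : ℝ
  /-- the degeneracy -/
  d : ℕ
  /-- the physical spin assignment -/
  P : T.V → K → S.V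
  /-- the decoding -/
  dec : (K → Fin S.q) → Fin T.q
  /-- the encodings -/
  enc : M → Fin T.q → (K → Fin S.q)
  /-- disjoint physical spins -/
  P_disjoint : ∀ v w i j, P v i = P w j → v = w ∧ i = j
  /-- decode-encode compatibility -/
  dec_enc : ∀ i x, dec (enc i x) = x
  /-- disjoint encodings -/
  enc_disjoint : ∀ i j x, enc i x = enc j x → i = j
  /-- constant local degeneracy -/
  deg : ∀ (i : M) (t : T.V → Fin T.q), T.H t < Δ →
    Set.ncard {s : S.V → Fin S.q |
      (∀ v, (fun j => s (P v j)) = enc i (t v)) ∧ S.H s - Γ < Δ} = d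
  /-- matching energies, low-energy case -/
  low : ∀ (t : T.V → Fin T.q) (s : S.V → Fin S.q) (i : M),
    (∀ v, (fun j => s (P v j)) = enc i (t v)) → S.H s - Γ < Δ → S.H s - Γ = T.H t
  /-- matching energies, high-energy case -/
  high : ∀ s : S.V → Fin S.q,
    (∀ (t : T.V → Fin T.q) (i : M),
      ¬ ((∀ v, (fun j => s (P v j)) = enc i (t v)) ∧ S.H s - Γ < Δ)) →
    Δ ≤ S.H s - Γ

namespace Simulation

variable {S T : SpinSys} {K M : Type} [Fintype K] [Fintype M]

/-- The set of source configurations simulating `t` via the `i`-th encoding. -/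
def simI (f : Simulation S T K M) (i : M) (t : T.Config) : Set S.Config :=
  {s | (∀ v, (fun j => s (f.P v j)) = f.enc i (t v)) ∧ S.H s - f.Γ < f.Δ}

/-- The set of source configurations simulating `t`. -/
def sim (f : Simulation S T K M) (t : T.Config) : Set S.Config :=
  ⋃ i : M, f.simI i t

/-- Decoding a source configuration into a target configuration. -/
def decode (f : Simulation S T K M) (s : S.Config) : T.Config :=
  fun v => f.dec (fun j => s (f.P v j))

end Simulation

/-- simulations preserve spectra below the cut-off:
`{ξ ∈ Im H_T : ξ < Δ} = {ξ ∈ Im (H_S − Γ) : ξ < Δ}`. -/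
theorem spectrum_preserved {S T : SpinSys} {K M : Type} [Fintype K] [Fintype M]
    (f : Simulation S T K M) (hM : Nonempty M) (hd : 0 < f.d) :
    {x : ℝ | (∃ t : T.Config, T.H t = x) ∧ x < f.Δ}
      = {x : ℝ | (∃ s : S.Config, S.H s - f.Γ = x) ∧ x < f.Δ} := by
  ext x
  simp only [Set.mem_setOf_eq]
  constructor
  · rintro ⟨⟨t, ht⟩, hx⟩
    refine ⟨?_, hx⟩
    obtain ⟨i⟩ := hM
    have hlow : T.H t < f.Δ := ht ▸ hx
    have hcard := f.deg i t hlow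
    have hne : {s : S.V → Fin S.q |
        (∀ v, (fun j => s (f.P v j)) = f.enc i (t v)) ∧ S.H s - f.Γ < f.Δ}.Nonempty := by
      apply Set.nonempty_of_ncard_ne_zero
      exact hcard ▸ hd.ne'
    obtain ⟨s, hs1, hs2⟩ := hne
    exact ⟨s, (f.low t s i hs1 hs2).trans ht⟩
  · rintro ⟨⟨s, hs⟩, hx⟩
    refine ⟨?_, hx⟩
    by_contra hcon
    push_neg at hcon
    have : ∀ (t : T.V → Fin T.q) (i : M),
        ¬ ((∀ v, (fun j => s (f.P v j)) = f.enc i (t v)) ∧ S.H s - f.Γ < f.Δ) := by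
      intro t i ⟨h1, h2⟩
      exact hcon t ((f.low t s i h1 h2).symm.trans hs)
    have := f.high s this
    linarith [hs ▸ this]
end

section
/- Simulations preserve ground states: if f : S → T is a simulation with cut-off Δ > min(H_T), and s is a ground state of S (i.e., H_S(s) = min H_S), then t := dec ∘ s ∘ P is a ground state of T (i.e., H_T(t) = min H_T). -/
/-- simulations preserve ground states: if `Δ > min H_T` and `s` is a
ground state of `S`, then `dec ∘ s ∘ P` is a ground state of `T`. -/
theorem ground_state_preserved {S T : SpinSys} {K M : Type} [Fintype K] [Fintype M]
    (f : Simulation S T K M) (hM : Nonempty M) (hd : 0 < f.d)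
    (hΔ : ∃ t : T.Config, T.H t < f.Δ)
    (s : S.Config) (hs : ∀ s' : S.Config, S.H s ≤ S.H s') :
    ∀ t' : T.Config, T.H (f.decode s) ≤ T.H t' := by
  intro t'
  obtain ⟨tΔ, htΔ⟩ := hΔ
  -- pick a minimizer t* of T.H
  have : Nonempty T.Config := ⟨tΔ⟩
  obtain ⟨tmin, htmin⟩ := Finite.exists_min T.H
  have htminΔ : T.H tmin < f.Δ := lt_of_le_of_lt (htmin tΔ) htΔ
  -- simI i tmin is nonempty
  obtain ⟨i⟩ := hM
  have hcard := f.deg i tmin htminΔ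
  have hne : {s : S.V → Fin S.q |
      (∀ v, (fun j => s (f.P v j)) = f.enc i (tmin v)) ∧ S.H s - f.Γ < f.Δ}.Nonempty := by
    rw [← Set.ncard_pos (Set.toFinite _), hcard]
    exact hd
  obtain ⟨s', hs'enc, hs'lt⟩ := hne
  have hs'eq : S.H s' - f.Γ = T.H tmin := f.low tmin s' i hs'enc hs'lt
  -- s has low energy
  have hslow : S.H s - f.Γ < f.Δ :=
    lt_of_le_of_lt (by linarith [hs s']) hs'lt
  -- so s simulates some t via some j
  by_contra hcon
  have : ∃ (t : T.V → Fin T.q) (j : M),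
      (∀ v, (fun k => s (f.P v k)) = f.enc j (t v)) ∧ S.H s - f.Γ < f.Δ := by
    by_contra h
    simp only [not_exists] at h
    have := f.high s (fun t j => h t j)
    linarith
  obtain ⟨t, j, htj, _⟩ := this
  have hdec : f.decode s = t := by
    funext v
    simp [Simulation.decode, htj v, f.dec_enc]
  have hEt : S.H s - f.Γ = T.H t := f.low t s j htj hslow
  have : T.H (f.decode s) ≤ T.H t' := by
    rw [hdec, ← hEt]
    calc S.H s - f.Γ ≤ S.H s' - f.Γ := by linarith [hs s']
    _ = T.H tmin := hs'eq
    _ ≤ T.H t' := htmin t'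
  exact hcon this
end

section
/- Approximation of the Boltzmann distribution under simulation: if f : S → T is a simulation with cut-off Δ > max(H_T), shift Γ, degeneracy d and m encodings, then for all β > 0 the total variation distance between the simulation distribution p_{f,β} and the Boltzmann distribution p_{T,β} satisfies ‖p_{f,β} − p_{T,β}‖ < (1/(m d)) · q_S^{|V_S|} · e^{−β(Δ − min(H_T))}. -/
/-- approximation of the Boltzmann distribution under simulation:
if `Δ > max H_T`, the total variation distance between the simulation distribution
`p_{f,β}` and the Boltzmann distribution `p_{T,β}` is less than
`q_S^{|V_S|} e^{−β(Δ − min H_T)}/(m d)`. -/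
theorem boltzmann_approx {S T : SpinSys} {K M : Type} [Fintype K] [Fintype M]
    (f : Simulation S T K M) (hm : 0 < Fintype.card M) (hd : 0 < f.d)
    (hΔ : ∀ t : T.Config, T.H t < f.Δ) (β : ℝ) (hβ : 0 < β) :
    (1 / 2) * ∑ t : T.Config,
        |(∑ s ∈ Finset.univ.filter (fun s : S.Config => f.decode s = t),
            Real.exp (-β * S.H s) / ∑ s' : S.Config, Real.exp (-β * S.H s')) -
          Real.exp (-β * T.H t) / ∑ t' : T.Config, Real.exp (-β * T.H t')|
      < 1 / ((Fintype.card M : ℝ) * (f.d : ℝ)) * (S.q : ℝ) ^ (Fintype.card S.V) *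
        Real.exp (-β * (f.Δ - ⨅ t' : T.Config, T.H t')) := by
  classical
  have hq : 0 < S.q := by have := S.two_le_q; omega
  have hTqpos : 0 < T.q := by have := T.two_le_q; omega
  haveI : Nonempty (Fin S.q) := ⟨⟨0, hq⟩⟩
  haveI : Nonempty (Fin T.q) := ⟨⟨0, hTqpos⟩⟩
  have hmd : (0:ℝ) < (Fintype.card M : ℝ) * (f.d : ℝ) :=
    mul_pos (by exact_mod_cast hm) (by exact_mod_cast hd)
  set I := ⨅ t' : T.Config, T.H t' with hIdef
  set ZS := ∑ s' : S.Config, Real.exp (-β * S.H s') with hZSdef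
  set ZT := ∑ t' : T.Config, Real.exp (-β * T.H t') with hZTdef
  have hZS : 0 < ZS := Finset.sum_pos (fun _ _ => Real.exp_pos _) Finset.univ_nonempty
  have hZT : 0 < ZT := Finset.sum_pos (fun _ _ => Real.exp_pos _) Finset.univ_nonempty
  have hRHSpos : 0 < 1 / ((Fintype.card M : ℝ) * (f.d : ℝ)) * (S.q : ℝ) ^ (Fintype.card S.V) *
      Real.exp (-β * (f.Δ - I)) :=
    mul_pos (mul_pos (one_div_pos.2 hmd) (by positivity)) (Real.exp_pos _)
  rcases isEmpty_or_nonempty T.V with hV | hV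
  · -- degenerate case: single target configuration, both distributions are the point mass
    haveI : Unique T.Config := Pi.uniqueOfIsEmpty _
    have hzero : ∀ t : T.Config,
        (∑ s ∈ Finset.univ.filter (fun s : S.Config => f.decode s = t),
            Real.exp (-β * S.H s) / ZS) - Real.exp (-β * T.H t) / ZT = 0 := by
      intro t
      have hfil : Finset.univ.filter (fun s : S.Config => f.decode s = t) = Finset.univ :=
        Finset.filter_true_of_mem (fun s _ => Subsingleton.elim _ _)
      have hZTval : ZT = Real.exp (-β * T.H t) := by
        rw [hZTdef, Fintype.sum_unique, Subsingleton.elim (default : T.Config) t]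
      rw [hfil, ← Finset.sum_div, ← hZSdef, div_self hZS.ne', hZTval,
        div_self (Real.exp_pos _).ne']
      ring
    simp only [hzero, abs_zero, Finset.sum_const_zero, mul_zero]
    exact hRHSpos
  · -- main case
    obtain ⟨v₀⟩ := hV
    let pe : S.Config → ℝ := fun s => Real.exp (-β * S.H s)
    let simF : M → T.Config → Finset S.Config := fun i t =>
      Finset.univ.filter
        (fun s => (∀ v, (fun j => s (f.P v j)) = f.enc i (t v)) ∧ S.H s - f.Γ < f.Δ)
    have hcard : ∀ i t, (simF i t).card = f.d := by
      intro i t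
      have h := f.deg i t (hΔ t)
      have hset : {s : S.Config |
          (∀ v, (fun j => s (f.P v j)) = f.enc i (t v)) ∧ S.H s - f.Γ < f.Δ}
          = ↑(simF i t) := by
        ext s
        constructor
        · intro hs; exact Finset.mem_coe.2 (Finset.mem_filter.2 ⟨Finset.mem_univ _, hs⟩)
        · intro hs; exact (Finset.mem_filter.1 (Finset.mem_coe.1 hs)).2
      rw [hset, Set.ncard_coe_finset] at h
      exact h
    have hdisj : ∀ t : T.Config, ∀ i ∈ (Finset.univ : Finset M), ∀ j ∈ (Finset.univ : Finset M),
        i ≠ j → Disjoint (simF i t) (simF j t) := by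
      intro t i _ j _ hij
      refine Finset.disjoint_left.2 (fun s hsi hsj => hij ?_)
      simp only [simF, Finset.mem_filter] at hsi hsj
      exact f.enc_disjoint i j (t v₀) ((hsi.2.1 v₀).symm.trans (hsj.2.1 v₀))
    let SimF : T.Config → Finset S.Config := fun t => Finset.univ.biUnion (fun i => simF i t)
    have hSimcard : ∀ t, (SimF t).card = Fintype.card M * f.d := by
      intro t
      rw [Finset.card_biUnion (hdisj t)]
      rw [Finset.sum_congr rfl (fun i _ => hcard i t), Finset.sum_const, smul_eq_mul,
        Finset.card_univ]
    have hdec : ∀ (i : M) (t : T.Config) (s : S.Config), s ∈ simF i t → f.decode s = t := by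
      intro i t s hs
      simp only [simF, Finset.mem_filter] at hs
      funext v
      show f.dec (fun j => s (f.P v j)) = t v
      rw [hs.2.1 v, f.dec_enc]
    let fib : T.Config → Finset S.Config := fun t =>
      Finset.univ.filter (fun s => f.decode s = t)
    have hsub : ∀ t, SimF t ⊆ fib t := by
      intro t s hs
      obtain ⟨i, _, hi⟩ := Finset.mem_biUnion.1 hs
      exact Finset.mem_filter.2 ⟨Finset.mem_univ _, hdec i t s hi⟩
    let Bt : T.Config → Finset S.Config := fun t => fib t \ SimF t
    have hhigh : ∀ t : T.Config, ∀ s ∈ Bt t, f.Δ ≤ S.H s - f.Γ := by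
      intro t s hs
      rw [Finset.mem_sdiff] at hs
      apply f.high
      intro t' i hcon
      have hs' : s ∈ simF i t' :=
        Finset.mem_filter.2 ⟨Finset.mem_univ _, hcon⟩
      have ht' : t' = t := by
        have h1 := hdec i t' s hs'
        have h2 : f.decode s = t := (Finset.mem_filter.1 hs.1).2
        rw [h1] at h2; exact h2
      exact hs.2 (by
        rw [← ht']
        exact Finset.mem_biUnion.2 ⟨i, Finset.mem_univ _, hs'⟩)
    set A := (Fintype.card M : ℝ) * (f.d : ℝ) * Real.exp (-β * f.Γ) with hAdef
    have hApos : 0 < A := mul_pos hmd (Real.exp_pos _)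
    have hSimSum : ∀ t, ∑ s ∈ SimF t, pe s = A * Real.exp (-β * T.H t) := by
      intro t
      have hval : ∀ s ∈ SimF t, pe s = Real.exp (-β * f.Γ) * Real.exp (-β * T.H t) := by
        intro s hs
        obtain ⟨i, _, hi⟩ := Finset.mem_biUnion.1 hs
        simp only [simF, Finset.mem_filter] at hi
        have hlow := f.low t s i hi.2.1 hi.2.2
        have hHs : S.H s = f.Γ + T.H t := by linarith
        show Real.exp (-β * S.H s) = _
        rw [hHs, ← Real.exp_add]
        ring_nf
      rw [Finset.sum_congr rfl hval, Finset.sum_const, hSimcard t, nsmul_eq_mul, hAdef]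
      push_cast
      ring
    have hfibsum : ∀ t, ∑ s ∈ fib t, pe s
        = A * Real.exp (-β * T.H t) + ∑ s ∈ Bt t, pe s := by
      intro t
      rw [← Finset.sum_sdiff (hsub t), hSimSum t, add_comm]
    set Esum := ∑ t : T.Config, ∑ s ∈ Bt t, pe s with hEsumdef
    have hEtnonneg : ∀ t : T.Config, (0:ℝ) ≤ ∑ s ∈ Bt t, pe s :=
      fun t => Finset.sum_nonneg (fun s _ => (Real.exp_pos _).le)
    have hEsumnonneg : 0 ≤ Esum := Finset.sum_nonneg (fun t _ => hEtnonneg t)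
    have hfiber_total : ∑ t : T.Config, ∑ s ∈ fib t, pe s = ZS := by
      rw [hZSdef]
      exact Finset.sum_fiberwise_of_maps_to (fun s _ => Finset.mem_univ (f.decode s)) pe
    have hZSsplit : ZS = A * ZT + Esum := by
      rw [← hfiber_total, hEsumdef]
      calc ∑ t : T.Config, ∑ s ∈ fib t, pe s
          = ∑ t : T.Config, (A * Real.exp (-β * T.H t) + ∑ s ∈ Bt t, pe s) :=
            Finset.sum_congr rfl (fun t _ => hfibsum t)
        _ = A * ZT + ∑ t : T.Config, ∑ s ∈ Bt t, pe s := by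
            rw [Finset.sum_add_distrib, ← Finset.mul_sum, hZTdef]
    -- bound on Esum
    have hEsumlt : Esum < (S.q : ℝ) ^ (Fintype.card S.V) * Real.exp (-β * (f.Γ + f.Δ)) := by
      have hcards : (∑ t : T.Config, (Bt t).card) + Fintype.card T.Config * (Fintype.card M * f.d)
          = S.q ^ (Fintype.card S.V) := by
        have h1 : ∀ t, (Bt t).card + (SimF t).card = (fib t).card :=
          fun t => Finset.card_sdiff_add_card_eq_card (hsub t)
        have h2 : ∑ t : T.Config, (fib t).card = S.q ^ (Fintype.card S.V) := by
          have := Finset.sum_fiberwise_of_maps_to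
            (fun (s : S.Config) (_ : s ∈ Finset.univ) => Finset.mem_univ (f.decode s))
            (fun _ => (1 : ℕ))
          simp only [Finset.sum_const, smul_eq_mul, mul_one] at this
          rw [show ∑ t : T.Config, (fib t).card = ∑ t : T.Config,
            (Finset.univ.filter (fun s => f.decode s = t)).card from rfl]
          rw [this, Finset.card_univ]
          rw [show Fintype.card S.Config = S.q ^ Fintype.card S.V by
            rw [Fintype.card_fun, Fintype.card_fin]]
        calc (∑ t : T.Config, (Bt t).card) + Fintype.card T.Config * (Fintype.card M * f.d)
            = ∑ t : T.Config, ((Bt t).card + (SimF t).card) := by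
              rw [Finset.sum_add_distrib]
              congr 1
              rw [Finset.sum_congr rfl (fun t _ => hSimcard t), Finset.sum_const,
                smul_eq_mul, Finset.card_univ]
          _ = ∑ t : T.Config, (fib t).card := Finset.sum_congr rfl (fun t _ => h1 t)
          _ = S.q ^ (Fintype.card S.V) := h2
      have hbound : Esum ≤ (∑ t : T.Config, (Bt t).card : ℝ) * Real.exp (-β * (f.Γ + f.Δ)) := by
        rw [hEsumdef]
        -- push_cast not needed
        rw [Finset.sum_mul]
        refine Finset.sum_le_sum (fun t _ => ?_)
        have : ∀ s ∈ Bt t, pe s ≤ Real.exp (-β * (f.Γ + f.Δ)) := by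
          intro s hs
          have h := hhigh t s hs
          have : -β * S.H s ≤ -β * (f.Γ + f.Δ) := by nlinarith
          exact Real.exp_le_exp.2 this
        calc ∑ s ∈ Bt t, pe s ≤ ∑ s ∈ Bt t, Real.exp (-β * (f.Γ + f.Δ)) :=
              Finset.sum_le_sum this
          _ = ((Bt t).card : ℝ) * Real.exp (-β * (f.Γ + f.Δ)) := by
              rw [Finset.sum_const, nsmul_eq_mul]
      have hlt : ((∑ t : T.Config, (Bt t).card : ℕ) : ℝ) < (S.q : ℝ) ^ (Fintype.card S.V) := by
        have hpos : 0 < Fintype.card T.Config * (Fintype.card M * f.d) :=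
          Nat.mul_pos Fintype.card_pos (Nat.mul_pos hm hd)
        have : (∑ t : T.Config, (Bt t).card) < S.q ^ (Fintype.card S.V) := by omega
        exact_mod_cast this
      calc Esum ≤ _ := hbound
        _ < (S.q : ℝ) ^ (Fintype.card S.V) * Real.exp (-β * (f.Γ + f.Δ)) := by
          apply mul_lt_mul_of_pos_right _ (Real.exp_pos _)
          exact_mod_cast hlt
    have hfibsum' : ∀ t : T.Config,
        ∑ s ∈ Finset.univ.filter (fun s : S.Config => f.decode s = t), Real.exp (-β * S.H s)
        = A * Real.exp (-β * T.H t) + ∑ s ∈ Bt t, pe s := hfibsum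
    clear_value pe simF SimF fib Bt A Esum ZS ZT I
    -- per-term bound
    have hterm : ∀ t : T.Config,
        |(∑ s ∈ Finset.univ.filter (fun s : S.Config => f.decode s = t),
            Real.exp (-β * S.H s) / ZS) - Real.exp (-β * T.H t) / ZT|
        ≤ (∑ s ∈ Bt t, pe s) / ZS + Real.exp (-β * T.H t) * Esum / (ZS * ZT) := by
      intro t
      have h1 : (∑ s ∈ Finset.univ.filter (fun s : S.Config => f.decode s = t),
          Real.exp (-β * S.H s) / ZS)
          = (A * Real.exp (-β * T.H t) + ∑ s ∈ Bt t, pe s) / ZS := by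
        rw [← Finset.sum_div, hfibsum' t]
      rw [h1]
      have key : (A * Real.exp (-β * T.H t) + ∑ s ∈ Bt t, pe s) / ZS
          - Real.exp (-β * T.H t) / ZT
          = (∑ s ∈ Bt t, pe s) / ZS - Real.exp (-β * T.H t) * Esum / (ZS * ZT) := by
        field_simp
        rw [hZSsplit]
        ring
      rw [key]
      refine (abs_sub _ _).trans ?_
      rw [abs_of_nonneg (div_nonneg (hEtnonneg t) hZS.le),
        abs_of_nonneg (div_nonneg (mul_nonneg (Real.exp_pos _).le hEsumnonneg)
          (mul_pos hZS hZT).le)]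
    -- sum the bound
    have hsum : (1 / 2 : ℝ) * ∑ t : T.Config,
        |(∑ s ∈ Finset.univ.filter (fun s : S.Config => f.decode s = t),
            Real.exp (-β * S.H s) / ZS) - Real.exp (-β * T.H t) / ZT|
        ≤ Esum / ZS := by
      have h1 : ∑ t : T.Config,
          |(∑ s ∈ Finset.univ.filter (fun s : S.Config => f.decode s = t),
              Real.exp (-β * S.H s) / ZS) - Real.exp (-β * T.H t) / ZT|
          ≤ ∑ t : T.Config,
            ((∑ s ∈ Bt t, pe s) / ZS + Real.exp (-β * T.H t) * Esum / (ZS * ZT)) :=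
        Finset.sum_le_sum (fun t _ => hterm t)
      have h2 : ∑ t : T.Config,
          ((∑ s ∈ Bt t, pe s) / ZS + Real.exp (-β * T.H t) * Esum / (ZS * ZT))
          = 2 * (Esum / ZS) := by
        rw [Finset.sum_add_distrib, ← Finset.sum_div, ← hEsumdef]
        have : ∑ t : T.Config, Real.exp (-β * T.H t) * Esum / (ZS * ZT)
            = (∑ t : T.Config, Real.exp (-β * T.H t)) * Esum / (ZS * ZT) := by
          rw [Finset.sum_mul, Finset.sum_div]
        rw [this, ← hZTdef]
        field_simp
        ring
      nlinarith [h1, h2]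
    -- finish
    have hZTge : Real.exp (-β * I) ≤ ZT := by
      obtain ⟨t₀, ht₀⟩ := Finite.exists_min T.H
      have hinf : I = T.H t₀ := by
        rw [hIdef]
        exact le_antisymm (ciInf_le (Set.Finite.bddBelow (Set.finite_range _)) t₀) (le_ciInf ht₀)
      rw [hinf, hZTdef]
      exact Finset.single_le_sum (fun t _ => (Real.exp_pos (-β * T.H t)).le)
        (Finset.mem_univ t₀)
    calc (1 / 2 : ℝ) * ∑ t : T.Config,
        |(∑ s ∈ Finset.univ.filter (fun s : S.Config => f.decode s = t),
            Real.exp (-β * S.H s) / ZS) - Real.exp (-β * T.H t) / ZT|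
        ≤ Esum / ZS := hsum
      _ ≤ Esum / (A * ZT) := by
          apply div_le_div_of_nonneg_left hEsumnonneg (mul_pos hApos hZT)
          rw [hZSsplit]; linarith
      _ < ((S.q : ℝ) ^ (Fintype.card S.V) * Real.exp (-β * (f.Γ + f.Δ))) / (A * ZT) := by
          exact div_lt_div_of_pos_right hEsumlt (mul_pos hApos hZT)
      _ ≤ ((S.q : ℝ) ^ (Fintype.card S.V) * Real.exp (-β * (f.Γ + f.Δ)))
          / (A * Real.exp (-β * I)) := by
          apply div_le_div_of_nonneg_left (by positivity) (mul_pos hApos (Real.exp_pos _))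
          exact mul_le_mul_of_nonneg_left hZTge hApos.le
      _ = 1 / ((Fintype.card M : ℝ) * (f.d : ℝ)) * (S.q : ℝ) ^ (Fintype.card S.V) *
          Real.exp (-β * (f.Δ - I)) := by
          rw [hAdef]
          have hexp : Real.exp (-β * (f.Γ + f.Δ))
              = Real.exp (-β * f.Γ) * (Real.exp (-β * (f.Δ - I)) * Real.exp (-β * I)) := by
            rw [← Real.exp_add, ← Real.exp_add]
            ring_nf
          rw [hexp]
          field_simp
end

section
/- Binary simulation: for every spin system S and every Δ ≥ 0, there exists a spin system B with spin type 2 and a simulation B → S with cut-off Δ, shift 0, degeneracy 1, and a single encoding. Concretely, with k = ⌈log₂ q_S⌉, spins V_B = V_S × [k], an injection enc : [q_S] → [2]^k with left inverse dec, hyperedges E_B = {e × [k] : e ∈ E_S}, and interactions J_B(e × [k])(s) = J_S(e)(dec ∘ s ∘ P) when every s ∘ P(v), v ∈ e, lies in the image of enc, and J_B(e × [k])(s) = Δ otherwise, where P(v) = ((v,1),...,(v,k)). -/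
/-- A spin system given concretely by hyperedges and local interactions on a
fixed (finite) spin set `V` with spin type `q`. -/
structure SpinSysFull (q : ℕ) (V : Type) [Fintype V] [DecidableEq V] where
  E : Finset (Finset V)
  J : Finset V → (V → Fin q) → ℝ
  J_nonneg : ∀ e s, 0 ≤ J e s
  J_local : ∀ e ∈ E, ∀ s s' : V → Fin q, (∀ v ∈ e, s v = s' v) → J e s = J e s'

/-- The Hamiltonian of a concrete spin system. -/
def SpinSysFull.H {q : ℕ} {V : Type} [Fintype V] [DecidableEq V]
    (S : SpinSysFull q V) (s : V → Fin q) : ℝ :=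
  ∑ e ∈ S.E, S.J e s

/-- The underlying abstract spin system. -/
def SpinSysFull.toSys {q : ℕ} {V : Type} [Fintype V] [DecidableEq V]
    (hq : 2 ≤ q) (S : SpinSysFull q V) : SpinSys where
  V := V
  fintypeV := inferInstance
  decV := inferInstance
  q := q
  two_le_q := hq
  H := S.H
  H_nonneg := fun s => Finset.sum_nonneg fun e _ => S.J_nonneg e s

private lemma bits_sum (k x : ℕ) :
    ∑ j ∈ Finset.range k, (x / 2 ^ j % 2) * 2 ^ j = x % 2 ^ k := by
  induction k with
  | zero => simp [Nat.mod_one]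
  | succ k ih =>
    rw [Finset.sum_range_succ, ih, pow_succ, Nat.mod_mul]
    ring

/-- binary simulation: for every spin system `S` (with no isolated
spins) and every `Δ ≥ 0`, there is a spin system `B` with spin type `2`, with spins
`V_S × [k]` for `k = ⌈log₂ q_S⌉` and hyperedges `{e × [k] : e ∈ E_S}`, together with
a simulation `B → S` with cut-off `Δ`, shift `0`, degeneracy `1`, a single encoding,
and physical spin assignment `P v = ((v,1),...,(v,k))`. -/
theorem binary_simulation {q : ℕ} {V : Type} [Fintype V] [DecidableEq V]
    (hq : 2 ≤ q) (S : SpinSysFull q V)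
    (hcov : ∀ v : V, ∃ e ∈ S.E, v ∈ e)
    (Δ : ℝ) (hΔ : 0 ≤ Δ) :
    ∃ (B : SpinSysFull 2 (V × Fin (Nat.clog 2 q)))
      (f : Simulation (B.toSys le_rfl) (S.toSys hq) (Fin (Nat.clog 2 q)) Unit),
      B.E = S.E.image (fun e => e ×ˢ (Finset.univ : Finset (Fin (Nat.clog 2 q)))) ∧
      f.Δ = Δ ∧ f.Γ = 0 ∧ f.d = 1 ∧ (∀ v j, f.P v j = (v, j)) := by
  classical
  set k := Nat.clog 2 q with hkdef
  have hk1 : 0 < k := Nat.clog_pos one_lt_two hq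
  have hq2k : q ≤ 2 ^ k := Nat.le_pow_clog one_lt_two q
  have hq0 : 0 < q := by omega
  haveI : Nonempty (Fin k) := ⟨⟨0, hk1⟩⟩
  -- binary encoding and decoding
  set penc : Fin q → Fin k → Fin 2 :=
    fun x j => ⟨(x : ℕ) / 2 ^ (j : ℕ) % 2, Nat.mod_lt _ two_pos⟩ with hpenc
  set pdec : (Fin k → Fin 2) → Fin q := fun s =>
    if h : (∑ j : Fin k, (s j : ℕ) * 2 ^ (j : ℕ)) < q then ⟨_, h⟩ else ⟨0, hq0⟩
    with hpdec
  have pdec_penc : ∀ x, pdec (penc x) = x := by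
    intro x
    have hsum : (∑ j : Fin k, ((penc x j : ℕ)) * 2 ^ (j : ℕ)) = (x : ℕ) := by
      rw [hpenc]
      rw [Fin.sum_univ_eq_sum_range (fun m => (x : ℕ) / 2 ^ m % 2 * 2 ^ m) k]
      rw [bits_sum]
      exact Nat.mod_eq_of_lt (lt_of_lt_of_le x.isLt hq2k)
    rw [hpdec]
    simp only [hsum]
    rw [dif_pos x.isLt]
  -- decoding of full configurations
  set restr : ((V × Fin k) → Fin 2) → V → (Fin k → Fin 2) :=
    fun s v j => s (v, j) with hrestr
  set D : ((V × Fin k) → Fin 2) → V → Fin q := fun s v => pdec (restr s v) with hD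
  have himg : ∀ e : Finset V,
      (e ×ˢ (Finset.univ : Finset (Fin k))).image Prod.fst = e :=
    fun e => Finset.product_image_fst Finset.univ_nonempty
  -- the binary spin system
  set JB : Finset (V × Fin k) → ((V × Fin k) → Fin 2) → ℝ := fun e' s =>
    if ∀ v ∈ e'.image Prod.fst, penc (pdec (restr s v)) = restr s v
    then S.J (e'.image Prod.fst) (D s) else Δ with hJB
  have hJBnn : ∀ e' s, 0 ≤ JB e' s := by
    intro e' s
    rw [hJB]
    dsimp only
    split
    · exact S.J_nonneg _ _
    · exact hΔ
  set B : SpinSysFull 2 (V × Fin k) :=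
    { E := S.E.image (fun e => e ×ˢ Finset.univ)
      J := JB
      J_nonneg := hJBnn
      J_local := by
        intro e' he' s s' hss'
        obtain ⟨e, he, rfl⟩ := Finset.mem_image.mp he'
        have hres : ∀ v ∈ e, restr s v = restr s' v := by
          intro v hv
          funext j
          exact hss' (v, j) (Finset.mem_product.mpr ⟨hv, Finset.mem_univ j⟩)
        have hDe : ∀ v ∈ e, D s v = D s' v := by
          intro v hv; rw [hD]; dsimp only; rw [hres v hv]
        have hcond : (∀ v ∈ e, penc (pdec (restr s v)) = restr s v) ↔
            (∀ v ∈ e, penc (pdec (restr s' v)) = restr s' v) := by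
          constructor <;> intro h v hv
          · rw [← hres v hv]; exact h v hv
          · rw [hres v hv]; exact h v hv
        rw [hJB]
        dsimp only
        rw [himg e]
        by_cases hc : ∀ v ∈ e, penc (pdec (restr s v)) = restr s v
        · rw [if_pos hc, if_pos (hcond.mp hc)]
          exact S.J_local e he _ _ hDe
        · rw [if_neg hc, if_neg (fun h => hc (hcond.mpr h))] } with hB
  have hBE : B.E = S.E.image (fun e => e ×ˢ Finset.univ) := rfl
  have hBJ : ∀ e' s, B.J e' s = JB e' s := fun _ _ => rfl
  have hHB : ∀ s, B.H s = ∑ e ∈ S.E, JB (e ×ˢ Finset.univ) s := by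
    intro s
    unfold SpinSysFull.H
    rw [hBE, Finset.sum_image]
    intro e₁ _ e₂ _ hh
    have := congrArg (Finset.image Prod.fst) hh
    rwa [himg e₁, himg e₂] at this
  -- low-energy matching
  have hlow : ∀ (t : V → Fin q) (s : (V × Fin k) → Fin 2),
      (∀ v, (fun j => s (v, j)) = penc (t v)) → B.H s = S.H t := by
    intro t s hst
    have hres : ∀ v, restr s v = penc (t v) := fun v => hst v
    have hDst : D s = t := by
      funext v
      rw [hD]; dsimp only; rw [hres v, pdec_penc]
    rw [hHB]
    unfold SpinSysFull.H
    refine Finset.sum_congr rfl fun e he => ?_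
    rw [hJB]
    dsimp only
    rw [himg e, if_pos, hDst]
    intro v hv
    rw [hres v, pdec_penc]
  -- high-energy bound
  have hhigh : ∀ s : (V × Fin k) → Fin 2,
      (∃ v, penc (pdec (restr s v)) ≠ restr s v) → Δ ≤ B.H s := by
    rintro s ⟨v₀, hv₀⟩
    obtain ⟨e, he, hve⟩ := hcov v₀
    have h1 : JB (e ×ˢ Finset.univ) s = Δ := by
      rw [hJB]
      dsimp only
      rw [himg e, if_neg]
      intro h
      exact hv₀ (h v₀ hve)
    rw [hHB]
    calc Δ = JB (e ×ˢ Finset.univ) s := h1.symm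
      _ ≤ ∑ e ∈ S.E, JB (e ×ˢ Finset.univ) s :=
        Finset.single_le_sum (fun e _ => hJBnn (e ×ˢ Finset.univ) s) he
  refine ⟨B, ?_, ?_⟩
  · refine
      { Δ := Δ
        Γ := 0
        d := 1
        P := fun v j => (v, j)
        dec := pdec
        enc := fun _ => penc
        P_disjoint := ?_
        dec_enc := fun _ x => pdec_penc x
        enc_disjoint := fun i j _ _ => Subsingleton.elim i j
        deg := ?_
        low := ?_
        high := ?_ }
    · intro v w i j h
      exact ⟨congrArg Prod.fst h, congrArg Prod.snd h⟩
    · -- deg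
      intro i t ht
      have hset : {s : (V × Fin k) → Fin 2 |
          (∀ v, (fun j => s (v, j)) = penc (t v)) ∧ B.H s - 0 < Δ} =
          {fun p : V × Fin k => penc (t p.1) p.2} := by
        ext s
        simp only [Set.mem_setOf_eq, Set.mem_singleton_iff]
        constructor
        · rintro ⟨h1, _⟩
          funext p
          exact congrFun (h1 p.1) p.2
        · rintro rfl
          refine ⟨fun v => rfl, ?_⟩
          rw [sub_zero, hlow t _ (fun v => rfl)]
          exact ht
      show Set.ncard {s : (V × Fin k) → Fin 2 |
          (∀ v, (fun j => s (v, j)) = penc (t v)) ∧ B.H s - 0 < Δ} = 1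
      rw [hset, Set.ncard_singleton]
    · -- low
      intro t s i hs _
      rw [sub_zero]
      exact hlow t s hs
    · -- high
      intro s hns
      by_contra hcon
      push_neg at hcon
      by_cases hall : ∀ v, penc (pdec (restr s v)) = restr s v
      · refine hns (D s) () ⟨?_, hcon⟩
        intro v
        show restr s v = penc (D s v)
        rw [hD]; dsimp only
        exact (hall v).symm
      · push_neg at hall
        rw [sub_zero] at hcon
        exact absurd (hhigh s hall) (not_le.mpr hcon)
  · exact ⟨rfl, rfl, rfl, rfl, fun _ _ => rfl⟩
end

section
/- Edge contraction as a simulation: let G_T be obtained from a graph G_S by contracting a single edge {a,b} (renaming b to a), and let T be a spin system on G_T. For any Δ > 0, define the spin system S on G_S by: J_S({a,b})(s_a,s_b) = 0 if s_a = s_b and Δ otherwise; for a choice g of one preimage edge for each edge e' of G_T under the contraction map, J_S(g(e'))(t ∘ f_{b→a}) = J_T(e')(t); and J_S(e) = 0 on all remaining edges. Then there is a simulation S → T with cut-off Δ, shift 0, degeneracy 1, identity encoding, and for each low-energy target configuration t, sim(t) = {t ∘ f_{b→a}}, where f_{b→a} : V_S → V_T renames b to a and fixes all other vertices. -/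
/-- edge contraction as a simulation: contracting the edge `{a,b}`
(renaming `b` to `a`) of the graph of `S` yields the graph of `T`; with
`J_S({a,b})` penalizing disagreement by `Δ`, `J_S(g e')` carrying the interaction of
`e'`, and `J_S = 0` elsewhere, one obtains a simulation `S → T` with cut-off `Δ`,
shift `0`, degeneracy `1`, identity encoding, and `sim t = {t ∘ f_{b→a}}` for each
low-energy target configuration `t`; in particular matching energies hold. -/
theorem edge_contraction_simulation {q : ℕ} {Ω : Type} [Fintype Ω] [DecidableEq Ω]
    (hq : 2 ≤ q) (a b : Ω) (hab : a ≠ b)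
    (S T : SpinSysFull q Ω)
    (hcard : ∀ e ∈ S.E, e.card = 2)
    (hab_mem : ({a, b} : Finset Ω) ∈ S.E)
    (hTE : T.E = (S.E.erase {a, b}).image
      (Finset.image (fun c => if c = b then a else c)))
    (g : Finset Ω → Finset Ω)
    (hg_mem : ∀ e' ∈ T.E, g e' ∈ S.E.erase {a, b})
    (hg_inv : ∀ e' ∈ T.E, (g e').image (fun c => if c = b then a else c) = e')
    (Δ : ℝ) (hΔ : 0 < Δ)
    (hJab : ∀ s : Ω → Fin q, S.J {a, b} s = if s a = s b then 0 else Δ)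
    (hJg : ∀ e' ∈ T.E, ∀ t : Ω → Fin q,
      S.J (g e') (fun v => t (if v = b then a else v)) = T.J e' t)
    (hJ0 : ∀ e ∈ S.E, e ≠ ({a, b} : Finset Ω) → (∀ e' ∈ T.E, g e' ≠ e) →
      ∀ s, S.J e s = 0) :
    (∀ t : Ω → Fin q, T.H t < Δ →
      {s : Ω → Fin q | (∀ v, v ≠ b → s v = t v) ∧ S.H s < Δ}
        = {fun v => t (if v = b then a else v)}) ∧
    (∀ (t s : Ω → Fin q), (∀ v, v ≠ b → s v = t v) → S.H s < Δ →
      S.H s = T.H t) := by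
  classical
  have hginj : ∀ e1 ∈ T.E, ∀ e2 ∈ T.E, g e1 = g e2 → e1 = e2 := by
    intro e1 h1 e2 h2 h
    rw [← hg_inv e1 h1, ← hg_inv e2 h2, h]
  have hsum : ∀ s : Ω → Fin q,
      ∑ e ∈ S.E.erase {a, b}, S.J e s = ∑ e' ∈ T.E, S.J (g e') s := by
    intro s
    have himg : ∑ e' ∈ T.E, S.J (g e') s = ∑ e ∈ T.E.image g, S.J e s :=
      (Finset.sum_image (f := fun e => S.J e s) (fun e1 h1 e2 h2 h => hginj e1 h1 e2 h2 h)).symm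
    rw [himg]
    symm
    apply Finset.sum_subset
    · intro e he
      obtain ⟨e', he', rfl⟩ := Finset.mem_image.mp he
      exact hg_mem e' he'
    · intro e he hne
      refine hJ0 e (Finset.mem_of_mem_erase he) (Finset.ne_of_mem_erase he) ?_ s
      intro e' he' hge
      exact hne (Finset.mem_image.mpr ⟨e', he', hge⟩)
  have hH : ∀ s : Ω → Fin q,
      S.H s = S.J {a, b} s + ∑ e' ∈ T.E, S.J (g e') s := by
    intro s
    rw [SpinSysFull.H, ← Finset.add_sum_erase _ _ hab_mem, hsum]
  have hHtf : ∀ t : Ω → Fin q,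
      S.H (fun v => t (if v = b then a else v)) = T.H t := by
    intro t
    rw [hH, hJab]
    have ha : (if a = b then a else a) = a := by simp
    have hb : (if b = b then a else b) = a := by simp
    rw [ha, hb, if_pos rfl, zero_add, SpinSysFull.H]
    exact Finset.sum_congr rfl fun e' he' => hJg e' he' t
  -- key: any low-energy s agreeing with t off b equals t ∘ f
  have hkey : ∀ (t s : Ω → Fin q), (∀ v, v ≠ b → s v = t v) → S.H s < Δ →
      s = fun v => t (if v = b then a else v) := by
    intro t s hs hlow
    have hab' : s a = s b := by
      by_contra hne
      have h1 : S.J {a, b} s = Δ := by rw [hJab, if_neg hne]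
      have h2 : (0:ℝ) ≤ ∑ e' ∈ T.E, S.J (g e') s :=
        Finset.sum_nonneg fun e' _ => S.J_nonneg _ s
      have := hH s
      linarith
    funext v
    by_cases hv : v = b
    · subst hv
      rw [if_pos rfl, ← hab', hs a hab]
    · rw [if_neg hv]; exact hs v hv
  refine ⟨?_, ?_⟩
  · intro t ht
    ext s
    simp only [Set.mem_setOf_eq, Set.mem_singleton_iff]
    constructor
    · rintro ⟨hs, hlow⟩
      exact hkey t s hs hlow
    · rintro rfl
      refine ⟨fun v hv => show t (if v = b then a else v) = t v by rw [if_neg hv], ?_⟩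
      rw [hHtf t]; exact ht
  · intro t s hs hlow
    rw [hkey t s hs hlow, hHtf t]
end

section
/- Composition of simulations: if f : R → T is a simulation (cut-off Δ_f, shift Γ_f, degeneracy d_f, encodings of order k₁) and g : S → R is a simulation (cut-off Δ_g, shift Γ_g, degeneracy d_g, encodings of order k₂), then there is a simulation g∘f : S → T with cut-off min(Δ_f, Δ_g − Γ_f), shift Γ_f + Γ_g, degeneracy d_f · d_g, physical spin assignment P_{g∘f}^{(m,n)} = P_g^{(m)} ∘ P_f^{(n)}, decoding dec_{g∘f}(x₁,...,x_{k₁}) = dec_f(dec_g(x₁),...,dec_g(x_{k₁})), and encodings (enc_{g∘f})_{i,j}^{(m,n)} = (enc_g)_i^{(m)} ∘ (enc_f)_j^{(n)}. Moreover, (sim_{g∘f})_{i,j}(t) = {s ∈ (sim_g)_i(r) : r ∈ (sim_f)_j(t)}. -/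
/-!
A low-energy configuration `s` of `S` decodes through `g` to a configuration `r` of `R`.
If `s` also agrees with a composite encoding `enc_g i ∘ enc_f j ∘ t` on the physical spins,
then decoding spin by spin shows that `r` is the `f`-encoding `enc_f j ∘ t`, and the
disjointness of the `g`-encodings forces `s` to use the encoding `i`. Shifts add along
`s ↦ r ↦ t`, so the composite simulation sets are the unions
`⋃ r ∈ (sim_f)_j(t), (sim_g)_i(r)`. These are disjoint, since `r` is recovered from `s`,
so their size is `d_f · d_g`.
-/

open Set Function

theorem Set.Finite.ncard_biUnion_of_ncard_eq {ι α : Type*} {t : Set ι} (ht : t.Finite)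
    {s : ι → Set α} (hs : ∀ i ∈ t, (s i).Finite) (h : t.PairwiseDisjoint s) {n : ℕ}
    (hn : ∀ i ∈ t, (s i).ncard = n) : (⋃ i ∈ t, s i).ncard = t.ncard * n := by
  rw [ht.ncard_biUnion hs h, finsum_mem_congr rfl hn, finsum_mem_eq_finite_toFinset_sum _ ht,
    Finset.sum_const, smul_eq_mul, ncard_eq_toFinset_card t ht]

namespace Simulation

section Basic

variable {S T : SpinSys} {K M : Type} [Fintype K] [Fintype M] (f : Simulation S T K M)

theorem eq_of_enc_eq {i i' : M} {x x' : Fin T.q} (h : f.enc i x = f.enc i' x') : x = x' := by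
  rw [← f.dec_enc i x, h, f.dec_enc]

theorem nonempty_of_encoding (f : Simulation S T K M) (i : M) : Nonempty K := by
  by_contra hK
  rw [not_nonempty_iff] at hK
  have hq := T.two_le_q
  have h01 := f.eq_of_enc_eq (Subsingleton.elim (f.enc i ⟨0, by omega⟩) (f.enc i ⟨1, by omega⟩))
  simp at h01

theorem eq_of_mem_simI {i : M} {t t' : T.Config} {s : S.Config} (h : s ∈ f.simI i t)
    (h' : s ∈ f.simI i t') : t = t' :=
  funext fun v => f.eq_of_enc_eq ((h.1 v).symm.trans (h'.1 v))

theorem pairwise_disjoint_simI (i : M) : Pairwise (Disjoint on f.simI i) :=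
  fun _ _ hne => disjoint_left.2 fun _ h h' => hne (f.eq_of_mem_simI h h')

theorem ncard_simI {t : T.Config} (ht : T.H t < f.Δ) (i : M) : (f.simI i t).ncard = f.d :=
  f.deg i t ht

theorem sub_eq_of_mem_simI {i : M} {t : T.Config} {s : S.Config} (h : s ∈ f.simI i t) :
    S.H s - f.Γ = T.H t :=
  f.low t s i h.1 h.2

theorem exists_mem_simI {s : S.Config} (hs : S.H s - f.Γ < f.Δ) : ∃ t i, s ∈ f.simI i t := by
  by_contra! h
  exact (f.high s h).not_gt hs

end Basic

section Composition

variable {S R T : SpinSys} {K₁ M₁ K₂ M₂ : Type} [Fintype K₁] [Fintype M₁] [Fintype K₂]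
  [Fintype M₂] (f : Simulation R T K₁ M₁) (g : Simulation S R K₂ M₂)

/-- Definitionally `(f.comp g).simI i t`, but available before `comp` is built. -/
def compSimI (i : M₂ × M₁) (t : T.Config) : Set S.Config :=
  {s | (∀ v, (fun p : K₂ × K₁ => s (g.P (f.P v p.2) p.1)) =
      fun p => g.enc i.1 (f.enc i.2 (t v) p.2) p.1) ∧
    S.H s - (f.Γ + g.Γ) < min f.Δ (g.Δ - f.Γ)}

theorem mem_compSimI_of_mem_simI {i : M₂ × M₁} {t : T.Config} {r : R.Config} {s : S.Config}
    (hr : r ∈ f.simI i.2 t) (hs : s ∈ g.simI i.1 r) : s ∈ f.compSimI g i t := by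
  refine ⟨fun v => funext fun p => ?_, ?_⟩
  · rw [← congrFun (hr.1 v) p.2]
    exact congrFun (hs.1 (f.P v p.2)) p.1
  · have := g.sub_eq_of_mem_simI hs
    exact lt_min (by linarith [hr.2]) (by linarith [hs.2])

theorem exists_mem_simI_of_mem_compSimI [Nonempty T.V] {i : M₂ × M₁} {t : T.Config}
    {s : S.Config} (hs : s ∈ f.compSimI g i t) : ∃ r ∈ f.simI i.2 t, s ∈ g.simI i.1 r := by
  obtain ⟨hc, he⟩ := hs
  obtain ⟨r, i', hr⟩ := g.exists_mem_simI (s := s) (by linarith [he.trans_le (min_le_right _ _)])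
  have henc : ∀ v n, g.enc i' (r (f.P v n)) = g.enc i.1 (f.enc i.2 (t v) n) := fun v n =>
    funext fun m => (congrFun (hr.1 _) m).symm.trans (congrFun (hc v) (m, n))
  have hrt : ∀ v n, r (f.P v n) = f.enc i.2 (t v) n := fun v n => g.eq_of_enc_eq (henc v n)
  obtain rfl : i' = i.1 := by
    obtain ⟨v⟩ := ‹Nonempty T.V›
    obtain ⟨n⟩ := f.nonempty_of_encoding i.2
    exact g.enc_disjoint _ _ _ (hrt v n ▸ henc v n)
  refine ⟨r, ⟨fun v => funext (hrt v), ?_⟩, hr⟩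
  linarith [g.sub_eq_of_mem_simI hr, he.trans_le (min_le_left _ _)]

theorem compSimI_eq [Nonempty T.V] (i : M₂ × M₁) (t : T.Config) :
    f.compSimI g i t = {s | ∃ r ∈ f.simI i.2 t, s ∈ g.simI i.1 r} :=
  Set.ext fun _ => ⟨f.exists_mem_simI_of_mem_compSimI g,
    fun ⟨_, hr, hs⟩ => f.mem_compSimI_of_mem_simI g hr hs⟩

theorem ncard_compSimI [Nonempty T.V] (i : M₂ × M₁) {t : T.Config}
    (ht : T.H t < min f.Δ (g.Δ - f.Γ)) : (f.compSimI g i t).ncard = f.d * g.d := by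
  have hunion : f.compSimI g i t = ⋃ r ∈ f.simI i.2 t, g.simI i.1 r := by
    rw [compSimI_eq]
    ext
    simp only [mem_ofPred_eq, mem_iUnion, exists_prop]
  rw [hunion, (toFinite _).ncard_biUnion_of_ncard_eq (fun _ _ => toFinite _)
      ((g.pairwise_disjoint_simI i.1).set_pairwise _), f.ncard_simI (ht.trans_le (min_le_left _ _))]
  intro r hr
  refine g.ncard_simI ?_ i.1
  linarith [f.sub_eq_of_mem_simI hr, ht.trans_le (min_le_right _ _)]

theorem eq_of_comp_enc_eq {i i' : M₂ × M₁} {x : Fin T.q}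
    (h : (fun p : K₂ × K₁ => g.enc i.1 (f.enc i.2 x p.2) p.1) =
      fun p => g.enc i'.1 (f.enc i'.2 x p.2) p.1) : i = i' := by
  have h₂ : i.2 = i'.2 := f.enc_disjoint _ _ x <| funext fun n =>
    g.eq_of_enc_eq <| funext fun m => congrFun h (m, n)
  obtain ⟨n⟩ := f.nonempty_of_encoding i.2
  refine Prod.ext (g.enc_disjoint _ _ (f.enc i.2 x n) <| funext fun m => ?_) h₂
  exact (congrFun h (m, n)).trans (by rw [h₂])

def comp [Nonempty T.V] : Simulation S T (K₂ × K₁) (M₂ × M₁) where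
  Δ := min f.Δ (g.Δ - f.Γ)
  Γ := f.Γ + g.Γ
  d := f.d * g.d
  P v p := g.P (f.P v p.2) p.1
  dec x := f.dec fun n => g.dec fun m => x (m, n)
  enc i x p := g.enc i.1 (f.enc i.2 x p.2) p.1
  P_disjoint _ _ _ _ h := by
    obtain ⟨h₁, h₂⟩ := g.P_disjoint _ _ _ _ h
    obtain ⟨rfl, h₃⟩ := f.P_disjoint _ _ _ _ h₁
    exact ⟨rfl, Prod.ext h₂ h₃⟩
  dec_enc _ _ := by simp only [g.dec_enc, f.dec_enc]
  enc_disjoint _ _ _ := f.eq_of_comp_enc_eq g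
  deg i _ := f.ncard_compSimI g i
  low _ _ _ hc he := by
    obtain ⟨r, hr, hs⟩ := f.exists_mem_simI_of_mem_compSimI g ⟨hc, he⟩
    linarith [g.sub_eq_of_mem_simI hs, f.sub_eq_of_mem_simI hr]
  high s hs := by
    by_contra! hlt
    obtain ⟨r, i, hr⟩ := g.exists_mem_simI (s := s) (by linarith [hlt.trans_le (min_le_right _ _)])
    obtain ⟨t, j, ht⟩ := f.exists_mem_simI (s := r)
      (by linarith [g.sub_eq_of_mem_simI hr, hlt.trans_le (min_le_left _ _)])
    exact hs t (i, j) (f.mem_compSimI_of_mem_simI (i := (i, j)) g ht hr)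

end Composition

end Simulation

theorem composition_of_simulations_general {S R T : SpinSys}
    {K₁ M₁ K₂ M₂ : Type} [Fintype K₁] [Fintype M₁] [Fintype K₂] [Fintype M₂]
    (hTV : Nonempty T.V)
    (f : Simulation R T K₁ M₁) (g : Simulation S R K₂ M₂) :
    ∃ h : Simulation S T (K₂ × K₁) (M₂ × M₁),
      h.Δ = min f.Δ (g.Δ - f.Γ) ∧
      h.Γ = f.Γ + g.Γ ∧
      h.d = f.d * g.d ∧
      (∀ v p, h.P v p = g.P (f.P v p.2) p.1) ∧
      (∀ x, h.dec x = f.dec fun n => g.dec fun m => x (m, n)) ∧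
      (∀ i x p, h.enc i x p = g.enc i.1 (f.enc i.2 x p.2) p.1) ∧
      (∀ (i : M₂ × M₁) (t : T.Config),
        h.simI i t = {s | ∃ r ∈ f.simI i.2 t, s ∈ g.simI i.1 r}) :=
  ⟨f.comp g, rfl, rfl, rfl, fun _ _ => rfl, fun _ => rfl, fun _ _ _ => rfl, f.compSimI_eq g⟩

/-- composition of simulations: from `f : R → T` and `g : S → R` one
obtains a simulation `g∘f : S → T` with cut-off `min(Δ_f, Δ_g − Γ_f)`, shift
`Γ_f + Γ_g`, degeneracy `d_f·d_g`, composite physical spin assignment, decoding and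
encodings, and simulation assignment
`(sim_{g∘f})_{i,j}(t) = {s ∈ (sim_g)_i(r) : r ∈ (sim_f)_j(t)}`. -/
theorem composition_of_simulations {S R T : SpinSys}
    {K₁ M₁ K₂ M₂ : Type} [Fintype K₁] [Fintype M₁] [Fintype K₂] [Fintype M₂]
    (hTV : Nonempty T.V) (hK₁ : Nonempty K₁)
    (f : Simulation R T K₁ M₁) (g : Simulation S R K₂ M₂) :
    ∃ h : Simulation S T (K₂ × K₁) (M₂ × M₁),
      h.Δ = min f.Δ (g.Δ - f.Γ) ∧
      h.Γ = f.Γ + g.Γ ∧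
      h.d = f.d * g.d ∧
      (∀ v p, h.P v p = g.P (f.P v p.2) p.1) ∧
      (∀ x, h.dec x = f.dec fun n => g.dec fun m => x (m, n)) ∧
      (∀ i x p, h.enc i x p = g.enc i.1 (f.enc i.2 x p.2) p.1) ∧
      (∀ (i : M₂ × M₁) (t : T.Config),
        h.simI i t = {s | ∃ r ∈ f.simI i.2 t, s ∈ g.simI i.1 r}) :=
  composition_of_simulations_general hTV f g
end

section
/- Addition of simulations produces matching energies on combined configurations: let f : S₁ → T₁ and g : S₂ → T₂ be simulations with equal decodings, physical spin assignments agreeing on V_{T₁} ∩ V_{T₂}, Im(P_f|_{V_{T₁}∩V_{T₂}}) = V_{S₁} ∩ V_{S₂}, and a common encoding enc_i. If t is a configuration of T₁ + T₂ with H_{T₁+T₂}(t) < min(Δ_f, Δ_g), and s₁ ∈ (sim_f)_{i}(t|_{V_{T₁}}), s₂ ∈ (sim_g)_{i}(t|_{V_{T₂}}) are simulating configurations built from the common encoding enc_i, then s₁ and s₂ agree on V_{S₁} ∩ V_{S₂}, and the combined configuration s := s₁ + s₂ on V_{S₁} ∪ V_{S₂} satisfies H_{S₁+S₂}(s) − (Γ_f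 + Γ_g) = H_{T₁+T₂}(t). -/
/-- addition of simulations produces matching energies on combined
configurations. Spin systems are given by their (local) Hamiltonians on ambient
source/target spin sets; `f : S₁ → T₁` and `g : S₂ → T₂` have equal decodings and a
common encoding `enc`, physical spin assignments agreeing on `V_{T₁} ∩ V_{T₂}`, and
`Im(P_f|_{V_{T₁}∩V_{T₂}}) = V_{S₁} ∩ V_{S₂}`. If `t` is a low-energy configuration of
`T₁ + T₂` and `s₁ ∈ (sim_f)_i(t|_{V_{T₁}})`, `s₂ ∈ (sim_g)_i(t|_{V_{T₂}})` are built
from the common encoding, then `s₁, s₂` agree on `V_{S₁} ∩ V_{S₂}` and the combined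
configuration `s = s₁ + s₂` satisfies
`H_{S₁+S₂}(s) − (Γ_f + Γ_g) = H_{T₁+T₂}(t)`. -/
theorem addition_of_simulations
    {qS qT k : ℕ} {ΩS ΩT : Type}
    [Fintype ΩS] [DecidableEq ΩS] [Fintype ΩT] [DecidableEq ΩT]
    (VS1 VS2 : Finset ΩS) (VT1 VT2 : Finset ΩT)
    (HS1 HS2 : (ΩS → Fin qS) → ℝ) (HT1 HT2 : (ΩT → Fin qT) → ℝ)
    (hS1loc : ∀ s s' : ΩS → Fin qS, (∀ v ∈ VS1, s v = s' v) → HS1 s = HS1 s')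
    (hS2loc : ∀ s s' : ΩS → Fin qS, (∀ v ∈ VS2, s v = s' v) → HS2 s = HS2 s')
    (hT1loc : ∀ t t' : ΩT → Fin qT, (∀ v ∈ VT1, t v = t' v) → HT1 t = HT1 t')
    (hT2loc : ∀ t t' : ΩT → Fin qT, (∀ v ∈ VT2, t v = t' v) → HT2 t = HT2 t')
    (hT1nonneg : ∀ t, 0 ≤ HT1 t) (hT2nonneg : ∀ t, 0 ≤ HT2 t)
    (Δf Δg Γf Γg : ℝ)
    (Pf Pg : ΩT → Fin k → ΩS)
    (enc : Fin qT → Fin k → Fin qS)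
    (hP : ∀ v ∈ VT1 ∩ VT2, ∀ j, Pf v j = Pg v j)
    (hIm : ∀ w : ΩS, w ∈ VS1 ∩ VS2 ↔ ∃ v ∈ VT1 ∩ VT2, ∃ j, Pf v j = w)
    (hf_low : ∀ (t : ΩT → Fin qT) (s : ΩS → Fin qS),
      (∀ v ∈ VT1, ∀ j, s (Pf v j) = enc (t v) j) → HS1 s - Γf < Δf →
      HS1 s - Γf = HT1 t)
    (hg_low : ∀ (t : ΩT → Fin qT) (s : ΩS → Fin qS),
      (∀ v ∈ VT2, ∀ j, s (Pg v j) = enc (t v) j) → HS2 s - Γg < Δg →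
      HS2 s - Γg = HT2 t)
    (t : ΩT → Fin qT) (ht : HT1 t + HT2 t < min Δf Δg)
    (s₁ s₂ : ΩS → Fin qS)
    (hs₁ : (∀ v ∈ VT1, ∀ j, s₁ (Pf v j) = enc (t v) j) ∧ HS1 s₁ - Γf < Δf)
    (hs₂ : (∀ v ∈ VT2, ∀ j, s₂ (Pg v j) = enc (t v) j) ∧ HS2 s₂ - Γg < Δg) :
    (∀ w ∈ VS1 ∩ VS2, s₁ w = s₂ w) ∧
    (HS1 (fun w => if w ∈ VS1 then s₁ w else s₂ w)
        + HS2 (fun w => if w ∈ VS1 then s₁ w else s₂ w)) - (Γf + Γg)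
      = HT1 t + HT2 t := by
  have hagree : ∀ w ∈ VS1 ∩ VS2, s₁ w = s₂ w := by
    intro w hw
    obtain ⟨v, hv, j, hvj⟩ := (hIm w).1 hw
    have h1 := hs₁.1 v (Finset.mem_inter.1 hv).1 j
    have h2 := hs₂.1 v (Finset.mem_inter.1 hv).2 j
    rw [← hP v hv j, hvj] at h2
    rw [hvj] at h1
    rw [h1, h2]
  refine ⟨hagree, ?_⟩
  set s : ΩS → Fin qS := fun w => if w ∈ VS1 then s₁ w else s₂ w with hs
  have e1 : HS1 s = HS1 s₁ := hS1loc _ _ (fun v hv => by simp [hs, hv])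
  have e2 : HS2 s = HS2 s₂ := hS2loc _ _ (fun v hv => by
    by_cases h : v ∈ VS1
    · simpa [hs, h] using hagree v (Finset.mem_inter.2 ⟨h, hv⟩)
    · simp [hs, h])
  have hf := hf_low t s₁ hs₁.1 hs₁.2
  have hg := hg_low t s₂ hs₂.1 hs₂.2
  rw [e1, e2]; linarith
end
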